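/- Let R be a commutative Krasner hyperring with nonzero identity and let T be a proper hyperideal of R. If T is a φ-prime hyperideal of R for a function φ : L(R) → L(R) ∪ {∅} with φ ≤ φ₃ (i.e. φ(N) ⊆ N³ for every hyperideal N), then T is a w-prime hyperideal of R. -/

import Mathlib

universe u

/-- A commutative Krasner hyperring with nonzero identity. -/
class KrasnerHyperring (R : Type u) where
  hadd : R → R → Set R
  mul : R → R → R
  zero : R
  one : R
  neg : R → R
  hadd_nonempty : ∀ a b : R, (hadd a b).Nonempty
  hadd_comm : ∀ a b : R, hadd a b = hadd b a
  hadd_assoc : ∀ a b c : R, (⋃ x ∈ hadd a b, hadd x c) = ⋃ y ∈ hadd b c, hadd a y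
  hadd_zero : ∀ a : R, hadd a zero = {a}
  zero_mem_hadd_neg : ∀ a : R, zero ∈ hadd a (neg a)
  neg_unique : ∀ a b : R, zero ∈ hadd a b → b = neg a
  reversible : ∀ a b c : R, c ∈ hadd a b → b ∈ hadd (neg a) c
  mul_assoc : ∀ a b c : R, mul (mul a b) c = mul a (mul b c)
  mul_comm : ∀ a b : R, mul a b = mul b a
  mul_one : ∀ a : R, mul a one = a
  mul_zero : ∀ a : R, mul a zero = zero
  one_ne_zero : one ≠ zero
  distrib : ∀ a b c : R, (fun x => mul a x) '' hadd b c = hadd (mul a b) (mul a c)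

namespace KrasnerHyperring

variable {R : Type u} [KrasnerHyperring R]

/-- A hyperideal of a Krasner hyperring. -/
structure Hyperideal (R : Type u) [KrasnerHyperring R] where
  carrier : Set R
  nonempty' : carrier.Nonempty
  hadd_subset' : ∀ a ∈ carrier, ∀ b ∈ carrier, hadd a b ⊆ carrier
  neg_mem' : ∀ a ∈ carrier, neg a ∈ carrier
  mul_mem' : ∀ r : R, ∀ a ∈ carrier, mul r a ∈ carrier

instance : SetLike (Hyperideal R) R where
  coe := Hyperideal.carrier
  coe_injective := by rintro ⟨⟩ ⟨⟩ h; congr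

/-- A hyperideal is proper if it is not the whole hyperring. -/
def Hyperideal.IsProper (N : Hyperideal R) : Prop := (N : Set R) ≠ Set.univ

/-- `A ⊕ B` for subsets. -/
def haddSet (A B : Set R) : Set R := ⋃ a ∈ A, ⋃ b ∈ B, hadd a b

/-- `A ∘ B` : set of all products. -/
def mulSet (A B : Set R) : Set R := {x : R | ∃ a ∈ A, ∃ b ∈ B, x = mul a b}

/-- The hyperideal generated by a set (as a set). -/
def genIdeal (S : Set R) : Set R := ⋂₀ {C : Set R | (∃ I : Hyperideal R, C = ↑I) ∧ S ⊆ C}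

/-- Products of `n` elements of `S`. -/
def setPow (S : Set R) : ℕ → Set R
  | 0 => Set.univ
  | 1 => S
  | (n+2) => mulSet S (setPow S (n+1))

/-- `N^n` : the hyperideal generated by products of `n` elements of `N`. -/
def idealPow (N : Hyperideal R) (n : ℕ) : Set R := genIdeal (setPow (↑N) n)

/-- Powers of an element. -/
def hpow (a : R) : ℕ → R
  | 0 => one
  | (n+1) => mul a (hpow a n)

/-- The radical of a set. -/
def radical (A : Set R) : Set R := {a : R | ∃ n : ℕ, 0 < n ∧ hpow a n ∈ A}

/-- `(A : a)`. -/
def colon (A : Set R) (a : R) : Set R := {r : R | mul a r ∈ A}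

/-- `(A : M)` for a set `M`. -/
def colonSet (A B : Set R) : Set R := {r : R | ∀ b ∈ B, mul r b ∈ A}

/-- Prime hyperideal. -/
def IsPrime (N : Hyperideal R) : Prop :=
  N.IsProper ∧ ∀ a b : R, mul a b ∈ N → a ∈ N ∨ b ∈ N

/-- Weakly prime hyperideal. -/
def IsWeaklyPrime (N : Hyperideal R) : Prop :=
  N.IsProper ∧ ∀ a b : R, mul a b ∈ N → mul a b ≠ zero → a ∈ N ∨ b ∈ N

/-- `φ`-prime hyperideal. -/
def IsPhiPrime (φ : Hyperideal R → Set R) (N : Hyperideal R) : Prop :=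
  N.IsProper ∧ ∀ a b : R, mul a b ∈ N → mul a b ∉ φ N → a ∈ N ∨ b ∈ N

/-- Primary hyperideal. -/
def IsPrimary (N : Hyperideal R) : Prop :=
  N.IsProper ∧ ∀ a b : R, mul a b ∈ N → a ∈ N ∨ ∃ k : ℕ, 0 < k ∧ hpow b k ∈ N

/-- `φ`-primary hyperideal. -/
def IsPhiPrimary (φ : Hyperideal R → Set R) (N : Hyperideal R) : Prop :=
  N.IsProper ∧ ∀ a b : R, mul a b ∈ N → mul a b ∉ φ N →
    a ∈ N ∨ ∃ k : ℕ, 0 < k ∧ hpow b k ∈ N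

/-- `δ`-primary hyperideal. -/
def IsDeltaPrimary (δ : Hyperideal R → Hyperideal R) (N : Hyperideal R) : Prop :=
  N.IsProper ∧ ∀ a b : R, mul a b ∈ N → a ∈ N ∨ b ∈ δ N

/-- `φ`-`δ`-primary hyperideal. -/
def IsPhiDeltaPrimary (φ : Hyperideal R → Set R) (δ : Hyperideal R → Hyperideal R)
    (N : Hyperideal R) : Prop :=
  N.IsProper ∧ ∀ a b : R, mul a b ∈ N → mul a b ∉ φ N → a ∈ N ∨ b ∈ δ N

/-- `φ : L(R) → L(R) ∪ {∅}` : every value is a hyperideal or the empty set. -/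
def MapsToIdealOrEmpty (φ : Hyperideal R → Set R) : Prop :=
  ∀ I : Hyperideal R, φ I = ∅ ∨ ∃ J : Hyperideal R, φ I = ↑J

/-- A reduction function. -/
def IsReduction (φ : Hyperideal R → Set R) : Prop :=
  MapsToIdealOrEmpty φ ∧ (∀ I : Hyperideal R, φ I ⊆ ↑I) ∧
    ∀ I J : Hyperideal R, (I : Set R) ⊆ ↑J → φ I ⊆ φ J

/-- An expansion function. -/
def IsExpansion (δ : Hyperideal R → Hyperideal R) : Prop :=
  (∀ I : Hyperideal R, (I : Set R) ⊆ ↑(δ I)) ∧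
    ∀ I J : Hyperideal R, (I : Set R) ⊆ ↑J → (δ I : Set R) ⊆ ↑(δ J)

/-- `φ_w(N) = ⋂_{n ≥ 1} N^n`. -/
def phiW (N : Hyperideal R) : Set R := ⋂ (n : ℕ) (_ : 1 ≤ n), idealPow N n

lemma zero_mem (N : Hyperideal R) : zero ∈ N := by
  obtain ⟨a, ha⟩ := N.nonempty'
  exact N.hadd_subset' a ha (neg a) (N.neg_mem' a ha) (zero_mem_hadd_neg a)

lemma proper_of_subset_proper {M T : Hyperideal R} (h : (M : Set R) ⊆ ↑T)
    (hT : T.IsProper) : M.IsProper :=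
  fun hu => hT (Set.univ_subset_iff.mp (hu ▸ h))

/-! If `a ∘ b ∈ T` lies outside `φ_w(T)` with `a, b ∉ T`, then `a ∘ b ∈ φ(T)`, so `φ(T)` is a
hyperideal `J`. As for rings, `a ∘ T ⊆ J` and `b ∘ T ⊆ J`, and then `T ∘ T ⊆ J`: an element `y` of
`b ⊕ q` with `q ∈ T` again lies outside `T` and `a ∘ y ∈ J`, so `(y, a)` is another such pair.
Hence `T² ⊆ J ⊆ T³`, the powers `T^n` stabilise from `n = 2` on, and
`a ∘ b ∈ J ⊆ T³ ⊆ φ_w(T)`. -/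

protected lemma mul_neg (a b : R) : mul a (neg b) = neg (mul a b) := by
  apply neg_unique
  have h : mul a zero ∈ (fun x => mul a x) '' hadd b (neg b) := ⟨zero, zero_mem_hadd_neg b, rfl⟩
  rwa [distrib, mul_zero] at h

lemma mul_mem_hadd_mul {a b c y : R} (hy : y ∈ hadd b c) :
    mul a y ∈ hadd (mul a b) (mul a c) := by
  rw [← distrib]
  exact ⟨y, hy, rfl⟩

namespace Hyperideal

variable {I : Hyperideal R}

lemma mem_of_mem_hadd {a b y : R} (hy : y ∈ hadd a b) (hyI : y ∈ I) (haI : a ∈ I) : b ∈ I :=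
  I.hadd_subset' _ (I.neg_mem' a haI) _ hyI (reversible a b y hy)

lemma notMem_of_mem_hadd {b q y : R} (hb : b ∉ I) (hq : q ∈ I) (hy : y ∈ hadd b q) : y ∉ I :=
  fun hyI => hb (I.mem_of_mem_hadd (hadd_comm b q ▸ hy) hyI hq)

lemma mem_of_hadd_subset {a b : R} (ha : a ∈ I) (h : hadd a b ⊆ I) : b ∈ I :=
  let ⟨_, hz⟩ := hadd_nonempty a b
  I.mem_of_mem_hadd hz (h hz) ha

lemma mul_mem_of_mem_hadd {a b c y : R} (hab : mul a b ∈ I) (hac : mul a c ∈ I)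
    (hy : y ∈ hadd b c) : mul a y ∈ I :=
  I.hadd_subset' _ hab _ hac (mul_mem_hadd_mul hy)

lemma mul_mem_of_forall_mem_hadd {a b c : R} (hab : mul a b ∈ I)
    (h : ∀ y ∈ hadd b c, mul a y ∈ I) : mul a c ∈ I := by
  refine I.mem_of_hadd_subset hab ?_
  rw [← distrib]
  rintro _ ⟨y, hy, rfl⟩
  exact h y hy

end Hyperideal

lemma mem_genIdeal {S : Set R} {x : R} :
    x ∈ genIdeal S ↔ ∀ I : Hyperideal R, S ⊆ I → x ∈ I := by
  simp only [genIdeal, Set.mem_sInter, Set.mem_ofPred_eq, and_imp, forall_exists_index]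
  exact ⟨fun h I hS => h I I rfl hS, fun h _ I hC hS => hC ▸ h I (hC ▸ hS)⟩

lemma subset_genIdeal (S : Set R) : S ⊆ genIdeal S :=
  fun _ hx => mem_genIdeal.mpr fun _ hS => hS hx

lemma genIdeal_subset {S : Set R} {I : Hyperideal R} (h : S ⊆ I) : genIdeal S ⊆ I :=
  fun _ hx => mem_genIdeal.mp hx I h

namespace Hyperideal

def span (S : Set R) : Hyperideal R where
  carrier := genIdeal S
  nonempty' := ⟨zero, mem_genIdeal.mpr fun I _ => zero_mem I⟩
  hadd_subset' a ha b hb _ hc := mem_genIdeal.mpr fun I hS =>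
    I.hadd_subset' a (mem_genIdeal.mp ha I hS) b (mem_genIdeal.mp hb I hS) hc
  neg_mem' a ha := mem_genIdeal.mpr fun I hS => I.neg_mem' a (mem_genIdeal.mp ha I hS)
  mul_mem' r a ha := mem_genIdeal.mpr fun I hS => I.mul_mem' r a (mem_genIdeal.mp ha I hS)

def colon (I : Hyperideal R) (S : Set R) : Hyperideal R where
  carrier := colonSet I S
  nonempty' := ⟨zero, fun s _ => by rw [mul_comm, mul_zero]; exact zero_mem I⟩
  hadd_subset' a ha b hb c hc s hs := by
    have hcs := mul_mem_hadd_mul (a := s) hc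
    rw [mul_comm s a, mul_comm s b, mul_comm s c] at hcs
    exact I.hadd_subset' _ (ha s hs) _ (hb s hs) hcs
  neg_mem' a ha s hs := by
    rw [mul_comm, KrasnerHyperring.mul_neg, mul_comm]
    exact I.neg_mem' _ (ha s hs)
  mul_mem' r a ha s hs := by
    rw [mul_assoc]
    exact I.mul_mem' r _ (ha s hs)

end Hyperideal

lemma setPow_succ_subset (N : Hyperideal R) (n : ℕ) : setPow (N : Set R) (n + 1) ⊆ N := by
  induction n with
  | zero => exact subset_rfl
  | succ n ih =>
    rintro _ ⟨t, -, y, hy, rfl⟩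
    exact N.mul_mem' t y (ih hy)

lemma mul_mem_idealPow_succ {N : Hyperideal R} {n : ℕ} {t x : R} (ht : t ∈ N)
    (hx : x ∈ idealPow N (n + 1)) : mul t x ∈ idealPow N (n + 2) := by
  have h : setPow (N : Set R) (n + 1) ⊆
      ((Hyperideal.span (setPow (N : Set R) (n + 2))).colon N : Set R) :=
    fun y hy s hs => subset_genIdeal _ ⟨s, hs, y, hy, mul_comm y s⟩
  rw [mul_comm]
  exact genIdeal_subset h hx t ht

lemma idealPow_three_subset_idealPow_succ {N : Hyperideal R}
    (h : setPow (N : Set R) 2 ⊆ idealPow N 3) (n : ℕ) : idealPow N 3 ⊆ idealPow N (n + 1) := by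
  induction n with
  | zero =>
    exact genIdeal_subset (I := Hyperideal.span (N : Set R))
      ((setPow_succ_subset N 2).trans (subset_genIdeal _))
  | succ n ih =>
    refine genIdeal_subset (I := Hyperideal.span _) ?_
    rintro _ ⟨t, ht, y, hy, rfl⟩
    exact mul_mem_idealPow_succ ht (ih (h hy))

lemma idealPow_three_subset_phiW {N : Hyperideal R} (h : setPow (N : Set R) 2 ⊆ idealPow N 3) :
    idealPow N 3 ⊆ phiW N := by
  intro x hx
  simp only [phiW, Set.mem_iInter]
  intro n hn
  obtain ⟨m, rfl⟩ := Nat.exists_eq_add_of_le' hn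
  exact idealPow_three_subset_idealPow_succ h m hx

namespace IsPhiPrime

variable {φ : Hyperideal R → Set R} {T J : Hyperideal R}

lemma mem_phi_of_notMem (hT : IsPhiPrime φ T) {a b : R} (ha : a ∉ T) (hb : b ∉ T)
    (hab : mul a b ∈ T) : mul a b ∈ φ T := by
  by_contra h
  exact (hT.2 a b hab h).elim ha hb

lemma mul_mem_of_notMem (hT : IsPhiPrime φ T) (hJ : φ T = J) {a b q : R} (ha : a ∉ T)
    (hb : b ∉ T) (hab : mul a b ∈ T) (habJ : mul a b ∈ J) (hq : q ∈ T) : mul a q ∈ J := by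
  refine J.mul_mem_of_forall_mem_hadd habJ fun y hy => ?_
  have hyT : y ∉ T := T.notMem_of_mem_hadd hb hq hy
  rw [← SetLike.mem_coe, ← hJ]
  exact hT.mem_phi_of_notMem ha hyT (T.mul_mem_of_mem_hadd hab (T.mul_mem' a q hq) hy)

lemma setPow_two_subset (hT : IsPhiPrime φ T) (hJ : φ T = J) {a b : R} (ha : a ∉ T)
    (hb : b ∉ T) (hab : mul a b ∈ T) (habJ : mul a b ∈ J) : setPow (T : Set R) 2 ⊆ J := by
  rintro _ ⟨p, hp, q, hq, rfl⟩
  have hba : mul b a ∈ T := mul_comm a b ▸ hab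
  have hbaJ : mul b a ∈ J := mul_comm a b ▸ habJ
  have hpb : mul p b ∈ J := mul_comm b p ▸ hT.mul_mem_of_notMem hJ hb ha hba hbaJ hp
  refine J.mul_mem_of_forall_mem_hadd hpb fun y hy => ?_
  have hyT : y ∉ T := T.notMem_of_mem_hadd hb hq hy
  have hay : mul a y ∈ T := T.mul_mem_of_mem_hadd hab (T.mul_mem' a q hq) hy
  have hayJ : mul a y ∈ J :=
    J.mul_mem_of_mem_hadd habJ (hT.mul_mem_of_notMem hJ ha hb hab habJ hq) hy
  rw [mul_comm]
  exact hT.mul_mem_of_notMem hJ hyT ha (mul_comm a y ▸ hay) (mul_comm a y ▸ hayJ) hp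

end IsPhiPrime

/-- If `T` is `φ`-prime for some `φ ≤ φ₃`, then `T` is `w`-prime. -/
theorem phiPrime_le_phi3_wPrime {R : Type u} [KrasnerHyperring R]
    (φ : Hyperideal R → Set R) (hφ : MapsToIdealOrEmpty φ)
    (hle : ∀ I : Hyperideal R, φ I ⊆ idealPow I 3)
    (T : Hyperideal R) (hT : IsPhiPrime φ T) :
    IsPhiPrime phiW T := by
  refine ⟨hT.1, fun a b hab habW => ?_⟩
  by_contra hne
  obtain ⟨ha, hb⟩ := not_or.mp hne
  have habφ : mul a b ∈ φ T := hT.mem_phi_of_notMem ha hb hab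
  obtain hE | ⟨J, hJ⟩ := hφ T
  · rw [hE] at habφ
    exact habφ
  have habJ : mul a b ∈ J := by rwa [hJ] at habφ
  have hJ3 : (J : Set R) ⊆ idealPow T 3 := hJ ▸ hle T
  have hsq : setPow (T : Set R) 2 ⊆ J := hT.setPow_two_subset hJ ha hb hab habJ
  exact habW (idealPow_three_subset_phiW (hsq.trans hJ3) (hJ3 habJ))

end KrasnerHyperring
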